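/- Let k, r ≥ 2, let s_1, …, s_k ∈ R^d be distinct unit vectors, and set β₀ = L / min{‖g(x)‖ : x ∈ X, g(x) ≠ 0}, where L = 8(r−1)². Let β₁ ∈ (0, 1] and η ≥ 1 be real numbers. For every nonzero w ∈ R^d with ‖w‖ β₁ / β₀ ≥ η^{|X|}, there exists an angle θ ∈ (0, π/2] with β₀/‖w‖ ≤ sin θ ≤ β₀ η^{|X|−1}/‖w‖ such that every x ∈ X with x ∉ W_θ satisfies sin θ(x) ≥ η sin θ. -/

import Mathlib

attribute [local instance] Classical.propDecidable

open scoped RealInnerProductSpace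

/-- The defining condition of the space `X` of swaps: `x ∈ ℤ^k` with all `|x i| ≤ 2r-2`,
`∑ x i = 0` and `∑ |x i| ≤ 4r-4`. -/
def SwapCond (k r : ℕ) (x : Fin k → ℤ) : Prop :=
  (∀ i, |x i| ≤ 2 * (r : ℤ) - 2) ∧ (∑ i, x i = 0) ∧ (∑ i, |x i| ≤ 4 * (r : ℤ) - 4)

/-- `g x = ∑ i, x i • s i`. -/
noncomputable def gMap {k d : ℕ} (s : Fin k → EuclideanSpace ℝ (Fin d))
    (x : Fin k → ℤ) : EuclideanSpace ℝ (Fin d) :=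
  ∑ i, (x i : ℝ) • s i

/-- The sine of the angle `θ(x)` between `g x` and the hyperplane `w^⊥`
(`0` by convention when `g x = 0`, matching division-by-zero conventions). -/
noncomputable def sinAngle {k d : ℕ} (s : Fin k → EuclideanSpace ℝ (Fin d))
    (w : EuclideanSpace ℝ (Fin d)) (x : Fin k → ℤ) : ℝ :=
  |⟪gMap s x, w⟫| / (‖gMap s x‖ * ‖w‖)

/-- The constant `β₀ = L / min {‖g x‖ : x ∈ X, g x ≠ 0}`, with `L = 8(r-1)²`. -/
noncomputable def beta0 (k r : ℕ) {d : ℕ} (s : Fin k → EuclideanSpace ℝ (Fin d)) : ℝ :=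
  8 * ((r : ℝ) - 1) ^ 2 /
    sInf {t : ℝ | ∃ x, SwapCond k r x ∧ gMap s x ≠ 0 ∧ t = ‖gMap s x‖}

/-! The windows `[α η^j, α η^(j+1))`, `j = 0, …, |X| - 1`, are pairwise disjoint, and only the
`|X| - 1` nonzero swaps can have their sine in one of them (the sine of the zero swap is `0`), so
one window contains no sine at all. Taking `sin θ` at its left end with `α = β₀ / ‖w‖`, every swap
whose sine is at least `sin θ` already lies beyond the window, i.e. its sine is at least `η sin θ`.
Here `α > 0` because `g(e_i - e_j) = s_i - s_j ≠ 0` makes `X` contain a swap with `g x ≠ 0`. -/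

section GeometricWindows

variable {a η y : ℝ}

lemma le_of_mul_pow_le_of_lt_mul_pow_succ {i j : ℕ} (ha : 0 ≤ a) (hη : 1 ≤ η)
    (hi : a * η ^ i ≤ y) (hj : y < a * η ^ (j + 1)) : i ≤ j := by
  by_contra! hji
  have : a * η ^ (j + 1) ≤ a * η ^ i :=
    mul_le_mul_of_nonneg_left (pow_le_pow_right₀ hη hji) ha
  linarith

lemma exists_lt_card_succ_forall_notMem_Ico {ι : Type*} (A : Finset ι) (f : ι → ℝ) (ha : 0 ≤ a)
    (hη : 1 ≤ η) : ∃ j < A.card + 1, ∀ x ∈ A, f x ∉ Set.Ico (a * η ^ j) (a * η ^ (j + 1)) := by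
  by_contra! hall
  have : Nonempty ι := ⟨(hall 0 (Nat.succ_pos _)).choose⟩
  choose! g hgA hg using hall
  have hcard : (Finset.range (A.card + 1)).card ≤ A.card := by
    refine Finset.card_le_card_of_injOn g (fun j hj => hgA j (Finset.mem_range.1 hj)) ?_
    intro i hi j hj hij
    have hgi := hg i (Finset.mem_range.1 hi)
    have hgj := hg j (Finset.mem_range.1 hj)
    rw [hij] at hgi
    exact le_antisymm (le_of_mul_pow_le_of_lt_mul_pow_succ ha hη hgi.1 hgj.2)
      (le_of_mul_pow_le_of_lt_mul_pow_succ ha hη hgj.1 hgi.2)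
  simp at hcard

lemma exists_lt_card_forall_notMem_Ico {ι : Type*} (A : Finset ι) (f : ι → ℝ) (ha : 0 < a)
    (hη : 1 ≤ η) {z : ι} (hz : z ∈ A) (hfz : f z < a) :
    ∃ j < A.card, ∀ x ∈ A, f x ∉ Set.Ico (a * η ^ j) (a * η ^ (j + 1)) := by
  obtain ⟨j, hj, hgap⟩ := exists_lt_card_succ_forall_notMem_Ico (A.erase z) f ha.le hη
  refine ⟨j, Finset.card_erase_add_one hz ▸ hj, fun x hx => ?_⟩
  by_cases hxz : x = z
  · subst hxz
    exact fun hmem => hfz.not_ge (le_trans (le_mul_of_one_le_right ha.le (one_le_pow₀ hη)) hmem.1)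
  · exact hgap x (Finset.mem_erase.2 ⟨hxz, hx⟩)

end GeometricWindows

section Swaps

variable {k r d : ℕ} {s : Fin k → EuclideanSpace ℝ (Fin d)}

lemma swapCond_finite (k r : ℕ) : {x : Fin k → ℤ | SwapCond k r x}.Finite :=
  (Set.Finite.pi fun _ => Set.finite_Icc (-(2 * (r : ℤ) - 2)) (2 * r - 2)).subset
    fun _ hx => Set.mem_univ_pi.2 fun i => Set.mem_Icc.2 (abs_le.1 (hx.1 i))

lemma swapCond_zero (hr : 1 ≤ r) : SwapCond k r 0 :=
  ⟨fun _ => by simp; omega, by simp, by simp; omega⟩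

lemma swapCond_single_sub_single (hr : 2 ≤ r) (i j : Fin k) :
    SwapCond k r (Pi.single i 1 - Pi.single j 1) := by
  refine ⟨fun l => ?_, by simp [Finset.sum_sub_distrib], ?_⟩
  · simp only [Pi.sub_apply, Pi.single_apply]
    split_ifs <;> simp <;> omega
  · calc ∑ l, |(Pi.single i 1 - Pi.single j 1 : Fin k → ℤ) l|
        ≤ ∑ l, (|(Pi.single i 1 : Fin k → ℤ) l| + |(Pi.single j 1 : Fin k → ℤ) l|) :=
          Finset.sum_le_sum fun l _ => abs_sub _ _
      _ = 2 := by simp [Finset.sum_add_distrib, Pi.single_apply, apply_ite (fun z : ℤ => |z|)]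
      _ ≤ 4 * (r : ℤ) - 4 := by omega

lemma gMap_zero : gMap s 0 = 0 := by
  simp [gMap]

lemma gMap_sub (x y : Fin k → ℤ) : gMap s (x - y) = gMap s x - gMap s y := by
  simp [gMap, sub_smul, Finset.sum_sub_distrib]

lemma gMap_single (i : Fin k) : gMap s (Pi.single i 1) = s i := by
  simp [gMap, Pi.single_apply]

lemma sinAngle_zero (w : EuclideanSpace ℝ (Fin d)) : sinAngle s w 0 = 0 := by
  simp [sinAngle, gMap_zero]

lemma exists_swapCond_gMap_ne_zero (hk : 2 ≤ k) (hr : 2 ≤ r) (hinj : Function.Injective s) :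
    ∃ x, SwapCond k r x ∧ gMap s x ≠ 0 := by
  let i₀ : Fin k := ⟨0, by omega⟩
  let i₁ : Fin k := ⟨1, by omega⟩
  have h01 : i₀ ≠ i₁ := by simp [i₀, i₁]
  refine ⟨_, swapCond_single_sub_single hr i₀ i₁, ?_⟩
  rw [gMap_sub, gMap_single, gMap_single]
  exact sub_ne_zero.2 (hinj.ne h01)

lemma beta0_pos (hk : 2 ≤ k) (hr : 2 ≤ r) (hinj : Function.Injective s) : 0 < beta0 k r s := by
  set S := {t : ℝ | ∃ x, SwapCond k r x ∧ gMap s x ≠ 0 ∧ t = ‖gMap s x‖}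
  obtain ⟨x, hx, hgx⟩ := exists_swapCond_gMap_ne_zero hk hr hinj
  have hS : S.Finite := ((swapCond_finite k r).image fun x => ‖gMap s x‖).subset
    (by rintro t ⟨y, hy, -, rfl⟩; exact ⟨y, hy, rfl⟩)
  obtain ⟨y, -, hgy, hy⟩ := (show S.Nonempty from ⟨_, x, hx, hgx, rfl⟩).csInf_mem hS
  have hr' : (1 : ℝ) ≤ r - 1 := by
    have : (2 : ℝ) ≤ r := by exact_mod_cast hr
    linarith
  rw [beta0, hy]
  exact div_pos (by positivity) (norm_pos_iff.2 hgy)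

end Swaps

lemma Real.exists_sin_eq {t : ℝ} (ht₀ : 0 < t) (ht₁ : t ≤ 1) :
    ∃ θ, 0 < θ ∧ θ ≤ Real.pi / 2 ∧ Real.sin θ = t :=
  ⟨Real.arcsin t, Real.arcsin_pos.2 ht₀, Real.arcsin_le_pi_div_two t,
    Real.sin_arcsin (by linarith) ht₁⟩

theorem exists_angle_with_jump_general (k r d : ℕ) (hk : 2 ≤ k) (hr : 2 ≤ r)
    (s : Fin k → EuclideanSpace ℝ (Fin d))
    (hinj : Function.Injective s)
    (β₁ η : ℝ) (hβ₁' : β₁ ≤ 1) (hη : 1 ≤ η)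
    (w : EuclideanSpace ℝ (Fin d)) (hw : w ≠ 0)
    (hbig : η ^ {x : Fin k → ℤ | SwapCond k r x}.ncard ≤ ‖w‖ * β₁ / beta0 k r s) :
    ∃ θ : ℝ, 0 < θ ∧ θ ≤ Real.pi / 2 ∧
      beta0 k r s / ‖w‖ ≤ Real.sin θ ∧
      Real.sin θ ≤ beta0 k r s * η ^ ({x : Fin k → ℤ | SwapCond k r x}.ncard - 1) / ‖w‖ ∧
      ∀ x : Fin k → ℤ, SwapCond k r x → ¬ sinAngle s w x < Real.sin θ →
        η * Real.sin θ ≤ sinAngle s w x := by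
  have hX := swapCond_finite k r
  have hβ₀ := beta0_pos hk hr hinj
  have hw' : 0 < ‖w‖ := norm_pos_iff.2 hw
  set n := {x : Fin k → ℤ | SwapCond k r x}.ncard
  set α := beta0 k r s / ‖w‖
  have hα : 0 < α := div_pos hβ₀ hw'
  obtain ⟨j, hjn, hgap⟩ := exists_lt_card_forall_notMem_Ico hX.toFinset (sinAngle s w) hα hη
    (hX.mem_toFinset.2 (swapCond_zero (by omega))) (by rwa [sinAngle_zero])
  rw [← Set.ncard_eq_toFinset_card _ hX] at hjn
  have hαn : α * η ^ n ≤ β₁ := by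
    rw [div_mul_eq_mul_div, div_le_iff₀ hw', mul_comm, mul_comm β₁]
    exact (le_div_iff₀ hβ₀).1 hbig
  have hjn' : α * η ^ j ≤ α * η ^ (n - 1) :=
    mul_le_mul_of_nonneg_left (pow_le_pow_right₀ hη (by omega)) hα.le
  have hn'n : α * η ^ (n - 1) ≤ α * η ^ n :=
    mul_le_mul_of_nonneg_left (pow_le_pow_right₀ hη (Nat.sub_le n 1)) hα.le
  obtain ⟨θ, hθ₀, hθ, hsin⟩ := Real.exists_sin_eq (t := α * η ^ j) (by positivity) (by linarith)
  refine ⟨θ, hθ₀, hθ, ?_⟩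
  rw [hsin, ← div_mul_eq_mul_div]
  refine ⟨le_mul_of_one_le_right hα.le (one_le_pow₀ hη), hjn', fun x hx hxt => ?_⟩
  calc η * (α * η ^ j) = α * η ^ (j + 1) := by ring
    _ ≤ sinAngle s w x := not_lt.1 fun hlt => hgap x (hX.mem_toFinset.2 hx) ⟨not_lt.1 hxt, hlt⟩

theorem exists_angle_with_jump (k r d : ℕ) (hk : 2 ≤ k) (hr : 2 ≤ r)
    (s : Fin k → EuclideanSpace ℝ (Fin d)) (hs : ∀ i, ‖s i‖ = 1)
    (hinj : Function.Injective s)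
    (β₁ η : ℝ) (hβ₁ : 0 < β₁) (hβ₁' : β₁ ≤ 1) (hη : 1 ≤ η)
    (w : EuclideanSpace ℝ (Fin d)) (hw : w ≠ 0)
    (hbig : η ^ {x : Fin k → ℤ | SwapCond k r x}.ncard ≤ ‖w‖ * β₁ / beta0 k r s) :
    ∃ θ : ℝ, 0 < θ ∧ θ ≤ Real.pi / 2 ∧
      beta0 k r s / ‖w‖ ≤ Real.sin θ ∧
      Real.sin θ ≤ beta0 k r s * η ^ ({x : Fin k → ℤ | SwapCond k r x}.ncard - 1) / ‖w‖ ∧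
      ∀ x : Fin k → ℤ, SwapCond k r x → ¬ sinAngle s w x < Real.sin θ →
        η * Real.sin θ ≤ sinAngle s w x :=
  exists_angle_with_jump_general k r d hk hr s hinj β₁ η hβ₁' hη w hw hbig
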